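/- For distinct pairs (L_x, L_y) of lower unitriangular m×m matrices over GF(2), the matrices L_y P L_x^{-1} are pairwise distinct, where P is the binary Pascal matrix. In other words, the map (L_x, L_y) ↦ L_y P L_x^{-1} is injective on pairs of lower unitriangular matrices. -/

import Mathlib

open Matrix

/-- The binary Pascal matrix over GF(2): entries C(j-1, i-1) mod 2 (1-indexed),
i.e. C(j, i) with 0-indexed `Fin`. -/
def pascal (m : ℕ) : Matrix (Fin m) (Fin m) (ZMod 2) :=
  fun i j => (Nat.choose j.val i.val : ZMod 2)

/-- The anti-diagonal matrix over GF(2), with ones on the anti-diagonal. -/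
def antiDiag (m : ℕ) : Matrix (Fin m) (Fin m) (ZMod 2) :=
  fun i j => if i.val + j.val + 1 = m then 1 else 0
/-- Lower unitriangular matrix over GF(2). -/
def IsLowerUni {m : ℕ} (L : Matrix (Fin m) (Fin m) (ZMod 2)) : Prop :=
  (∀ i, L i i = 1) ∧ ∀ i j : Fin m, i < j → L i j = 0

/-- Upper unitriangular matrix over GF(2). -/
def IsUpperUni {m : ℕ} (U : Matrix (Fin m) (Fin m) (ZMod 2)) : Prop :=
  (∀ i, U i i = 1) ∧ ∀ i j : Fin m, j < i → U i j = 0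


/-!
Let `J` be the antidiagonal matrix and `Q := J P J`, which is lower unitriangular. Reading off
coefficients of `∑ₖ C(j,k) (1 + X)^(n-k) = X^j (1 + X)^(n-j)` in characteristic 2 gives
`P J = Q P`. If `A P = P B` with `A`, `B` lower unitriangular, then
`(Q⁻¹ A Q) P = Q⁻¹ A P J = Q⁻¹ P B J = P (J B J)` is an LU factorisation of an upper
unitriangular matrix, so `Q⁻¹ A Q = 1` by uniqueness of the LU decomposition; hence `A = 1` and
then `B = 1`. The theorem is the case `A = L_y'⁻¹ L_y`, `B = L_x'⁻¹ L_x`.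
-/

open Polynomial Finset in
theorem CharTwo.sum_choose_mul_choose {R : Type*} [CommRing R] [CharP R 2] {n i j : ℕ}
    (hi : i ≤ n) (hj : j ≤ n) :
    ∑ k ∈ range (j + 1), ((n - k).choose (n - i) : R) * (j.choose k : R) =
      (n - j).choose i := by
  have hpoly : ∑ k ∈ range (j + 1), (1 + X : R[X]) ^ (n - k) * (j.choose k : R[X])
      = X ^ j * (1 + X) ^ (n - j) := by
    calc ∑ k ∈ range (j + 1), (1 + X : R[X]) ^ (n - k) * (j.choose k : R[X])
        = (1 + X) ^ (n - j) *
            ∑ k ∈ range (j + 1), 1 ^ k * (1 + X) ^ (j - k) * (j.choose k : R[X]) := by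
          rw [mul_sum]
          refine sum_congr rfl fun k hk => ?_
          rw [show n - k = (n - j) + (j - k) by have := mem_range.1 hk; omega, pow_add]
          ring
      _ = (1 + X) ^ (n - j) * (1 + (1 + X)) ^ j := by rw [add_pow (1 : R[X]) (1 + X)]
      _ = X ^ j * (1 + X) ^ (n - j) := by
          rw [← add_assoc, CharTwo.add_self_eq_zero, zero_add, mul_comm]
  have := congrArg (coeff · (n - i)) hpoly
  simp only [finsetSum_coeff, coeff_mul_natCast, coeff_one_add_X_pow, coeff_X_pow_mul'] at this
  rw [this]
  split_ifs with h
  · rw [show n - i - j = (n - j) - i by omega, Nat.choose_symm (by omega)]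
  · rw [Nat.choose_eq_zero_of_lt (by omega), Nat.cast_zero]

namespace Matrix

theorem BlockTriangular.mul_apply_self {n R α : Type*} [Fintype n] [NonUnitalNonAssocSemiring R]
    [LinearOrder α] {M N : Matrix n n R} {b : n → α} (hb : Function.Injective b)
    (hM : M.BlockTriangular b) (hN : N.BlockTriangular b) (i : n) :
    (M * N) i i = M i i * N i i := by
  rw [mul_apply, Finset.sum_eq_single i]
  · intro k _ hk
    rcases lt_or_gt_of_ne (hb.ne hk) with h | h
    · rw [hM h, zero_mul]
    · rw [hN h, mul_zero]
  · simp

end Matrix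

section Antidiagonal

variable {m : ℕ}

theorem antiDiag_eq_toMatrix : antiDiag m = (Fin.revPerm.toPEquiv).toMatrix := by
  ext i j
  simp only [antiDiag, PEquiv.toMatrix_apply, Equiv.toPEquiv_apply, Fin.revPerm_apply,
    Option.mem_def, Option.some.injEq, Fin.ext_iff, Fin.val_rev]
  congr 1
  exact propext (by omega)

theorem antiDiag_mul (M : Matrix (Fin m) (Fin m) (ZMod 2)) :
    antiDiag m * M = M.submatrix Fin.rev id := by
  rw [antiDiag_eq_toMatrix, PEquiv.toMatrix_toPEquiv_mul]
  rfl

theorem mul_antiDiag (M : Matrix (Fin m) (Fin m) (ZMod 2)) :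
    M * antiDiag m = M.submatrix id Fin.rev := by
  rw [antiDiag_eq_toMatrix, PEquiv.mul_toMatrix_toPEquiv, Fin.revPerm_symm]
  rfl

theorem antiDiag_mul_antiDiag : antiDiag m * antiDiag m = 1 := by
  ext i j
  simp only [antiDiag_mul, submatrix_apply, antiDiag, Fin.val_rev, id_eq, one_apply, Fin.ext_iff]
  congr 1
  exact propext (by omega)

theorem antiDiag_conj_apply (M : Matrix (Fin m) (Fin m) (ZMod 2)) (i j : Fin m) :
    (antiDiag m * M * antiDiag m) i j = M i.rev j.rev := by
  simp [antiDiag_mul, mul_antiDiag]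

end Antidiagonal

section Unitriangular

variable {m : ℕ} {A B L U V : Matrix (Fin m) (Fin m) (ZMod 2)}

theorem IsLowerUni.isLowerTriangular (hA : IsLowerUni A) : A.IsLowerTriangular :=
  fun i j hij => hA.2 i j hij

theorem IsLowerUni.mul (hA : IsLowerUni A) (hB : IsLowerUni B) : IsLowerUni (A * B) :=
  ⟨fun i => by
    rw [hA.isLowerTriangular.mul_apply_self OrderDual.toDual.injective hB.isLowerTriangular,
      hA.1, hB.1, one_mul],
   fun _ _ hij => hA.isLowerTriangular.mul hB.isLowerTriangular hij⟩

theorem IsLowerUni.isUnit_det (hA : IsLowerUni A) : IsUnit A.det := by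
  simp [det_of_isLowerTriangular A hA.isLowerTriangular, hA.1]

theorem IsLowerUni.inv (hA : IsLowerUni A) : IsLowerUni A⁻¹ := by
  have := invertibleOfIsUnitDet A hA.isUnit_det
  have hinv : A⁻¹.IsLowerTriangular :=
    blockTriangular_inv_of_blockTriangular hA.isLowerTriangular
  refine ⟨fun i => ?_, fun _ _ hij => hinv hij⟩
  have h := congr_fun₂ (mul_inv_of_invertible A) i i
  rwa [hA.isLowerTriangular.mul_apply_self OrderDual.toDual.injective hinv, hA.1, one_mul,
    one_apply_eq] at h

theorem isUpperUni_iff_isLowerUni_transpose : IsUpperUni U ↔ IsLowerUni Uᵀ :=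
  ⟨fun h => ⟨h.1, fun i j hij => h.2 j i hij⟩,
   fun h => ⟨h.1, fun i j hij => h.2 j i hij⟩⟩

theorem IsUpperUni.mul (hA : IsUpperUni A) (hB : IsUpperUni B) : IsUpperUni (A * B) := by
  rw [isUpperUni_iff_isLowerUni_transpose, transpose_mul]
  exact (isUpperUni_iff_isLowerUni_transpose.1 hB).mul (isUpperUni_iff_isLowerUni_transpose.1 hA)

theorem IsUpperUni.isUnit_det (hA : IsUpperUni A) : IsUnit A.det := by
  rw [← det_transpose]
  exact (isUpperUni_iff_isLowerUni_transpose.1 hA).isUnit_det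

theorem IsUpperUni.inv (hA : IsUpperUni A) : IsUpperUni A⁻¹ := by
  rw [isUpperUni_iff_isLowerUni_transpose, transpose_nonsing_inv]
  exact (isUpperUni_iff_isLowerUni_transpose.1 hA).inv

theorem IsLowerUni.antiDiag_conj (hA : IsLowerUni A) : IsUpperUni (antiDiag m * A * antiDiag m) :=
  ⟨fun i => by rw [antiDiag_conj_apply, hA.1],
   fun i j hij => by rw [antiDiag_conj_apply, hA.2 _ _ (Fin.rev_lt_rev.2 hij)]⟩

theorem IsUpperUni.antiDiag_conj (hA : IsUpperUni A) : IsLowerUni (antiDiag m * A * antiDiag m) :=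
  ⟨fun i => by rw [antiDiag_conj_apply, hA.1],
   fun i j hij => by rw [antiDiag_conj_apply, hA.2 _ _ (Fin.rev_lt_rev.2 hij)]⟩

theorem IsLowerUni.eq_one_of_isUpperUni (hL : IsLowerUni L) (hU : IsUpperUni L) : L = 1 := by
  ext i j
  rcases lt_trichotomy i j with h | rfl | h
  · rw [hL.2 i j h, one_apply_ne h.ne]
  · rw [hL.1, one_apply_eq]
  · rw [hU.2 i j h, one_apply_ne h.ne']

theorem IsLowerUni.eq_one_of_mul_eq (hL : IsLowerUni L) (hU : IsUpperUni U) (hV : IsUpperUni V)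
    (h : L * U = V) : L = 1 := by
  have hLV : L = V * U⁻¹ := by rw [← h, mul_nonsing_inv_cancel_right _ _ hU.isUnit_det]
  exact hL.eq_one_of_isUpperUni (hLV ▸ hV.mul hU.inv)

end Unitriangular

theorem isUpperUni_pascal (m : ℕ) : IsUpperUni (pascal m) :=
  ⟨fun i => by simp [pascal], fun i j hij => by simp [pascal, Nat.choose_eq_zero_of_lt hij]⟩

theorem pascal_mul_antiDiag (m : ℕ) :
    pascal m * antiDiag m = antiDiag m * pascal m * antiDiag m * pascal m := by
  ext i j
  obtain ⟨n, rfl⟩ : ∃ n, m = n + 1 := ⟨m - 1, by have := i.isLt; omega⟩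
  rw [mul_antiDiag, mul_apply]
  simp only [submatrix_apply, id, antiDiag_conj_apply, pascal, Fin.val_rev, Nat.add_sub_add_right]
  rw [Fin.sum_univ_eq_sum_range
      (fun k => ((n - k).choose (n - i) : ZMod 2) * ((j : ℕ).choose k : ZMod 2)),
    ← Finset.sum_subset (Finset.range_subset_range.2 j.isLt) fun k _ hk => ?_,
    CharTwo.sum_choose_mul_choose (Nat.lt_succ_iff.1 i.isLt) (Nat.lt_succ_iff.1 j.isLt)]
  rw [Nat.choose_eq_zero_of_lt (show (j : ℕ) < k by simpa using hk), Nat.cast_zero, mul_zero]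

theorem IsLowerUni.eq_one_of_mul_pascal_eq {m : ℕ} {A B : Matrix (Fin m) (Fin m) (ZMod 2)}
    (hA : IsLowerUni A) (hB : IsLowerUni B) (h : A * pascal m = pascal m * B) :
    A = 1 ∧ B = 1 := by
  set J := antiDiag m
  set P := pascal m
  set Q := J * P * J
  have hP : IsUpperUni P := isUpperUni_pascal m
  have hQ : IsLowerUni Q := hP.antiDiag_conj
  have hQP : Q * P = P * J := (pascal_mul_antiDiag m).symm
  have hLU : Q⁻¹ * A * Q * P = P * (J * B * J) :=
    calc Q⁻¹ * A * Q * P = Q⁻¹ * (A * P * J) := by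
          rw [Matrix.mul_assoc _ Q, hQP]; simp only [Matrix.mul_assoc]
      _ = Q⁻¹ * (P * J * (J * B * J)) := by
          rw [h]; simp only [Matrix.mul_assoc]
          rw [← Matrix.mul_assoc J J, antiDiag_mul_antiDiag, Matrix.one_mul]
      _ = P * (J * B * J) := by
          rw [← hQP, Matrix.mul_assoc Q, nonsing_inv_mul_cancel_left _ _ hQ.isUnit_det]
  have hconj : Q⁻¹ * A * Q = 1 :=
    ((hQ.inv.mul hA).mul hQ).eq_one_of_mul_eq hP (hP.mul hB.antiDiag_conj) hLU
  have hA1 : A = 1 :=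
    calc A = Q * (Q⁻¹ * A * Q) * Q⁻¹ := by
          rw [Matrix.mul_assoc Q⁻¹, mul_nonsing_inv_cancel_left _ _ hQ.isUnit_det,
            mul_nonsing_inv_cancel_right _ _ hQ.isUnit_det]
      _ = 1 := by rw [hconj, Matrix.mul_one, mul_nonsing_inv _ hQ.isUnit_det]
  refine ⟨hA1, ?_⟩
  rw [hA1, Matrix.one_mul] at h
  calc B = P⁻¹ * (P * B) := (nonsing_inv_mul_cancel_left _ _ hP.isUnit_det).symm
    _ = 1 := by rw [← h, nonsing_inv_mul _ hP.isUnit_det]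

/-- The map `(L_x, L_y) ↦ L_y P L_x⁻¹` is injective on pairs of lower
unitriangular matrices over GF(2). -/
theorem characteristic_injective (m : ℕ)
    (Lx Ly Lx' Ly' : Matrix (Fin m) (Fin m) (ZMod 2))
    (hLx : IsLowerUni Lx) (hLy : IsLowerUni Ly)
    (hLx' : IsLowerUni Lx') (hLy' : IsLowerUni Ly')
    (h : Ly * pascal m * Lx⁻¹ = Ly' * pascal m * Lx'⁻¹) :
    Lx = Lx' ∧ Ly = Ly' := by
  have hcomm : Ly'⁻¹ * Ly * pascal m = pascal m * (Lx'⁻¹ * Lx) :=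
    calc Ly'⁻¹ * Ly * pascal m = Ly'⁻¹ * (Ly * pascal m * Lx⁻¹) * Lx := by
          rw [Matrix.mul_assoc _ _ Lx, nonsing_inv_mul_cancel_right _ _ hLx.isUnit_det,
            Matrix.mul_assoc]
      _ = pascal m * (Lx'⁻¹ * Lx) := by
          rw [h, Matrix.mul_assoc Ly', nonsing_inv_mul_cancel_left _ _ hLy'.isUnit_det,
            Matrix.mul_assoc]
  obtain ⟨hy, hx⟩ := (hLy'.inv.mul hLy).eq_one_of_mul_pascal_eq (hLx'.inv.mul hLx) hcomm
  exact ⟨(inv_eq_right_inv hx).symm.trans (nonsing_inv_nonsing_inv _ hLx'.isUnit_det),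
    (inv_eq_right_inv hy).symm.trans (nonsing_inv_nonsing_inv _ hLy'.isUnit_det)⟩
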